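/- arXiv:2411.07743 — 9 statements merged into one kernel-verified Lean document; each statement's English description precedes it below -/
import Mathlib

section
/- Let q > 1, let θ_q = arccos(1/√q) ∈ (0, π/2), and let ρ be a C² positive 2π-periodic function with (ln ρ)''(t) < √q/(1+√q) for all t. Then for each α ∈ ℝ the equation (ln ρ)'(θ) = √q·sin(θ−α)/(√q·cos(θ−α)+1) has exactly one solution θ with θ − α ∈ (θ_q − π, π − θ_q) and exactly one solution θ with θ − α ∈ (π − θ_q, π + θ_q). -/
/-!
Write `c = √q`, `h = sinRatio c` and `G s = (ln ρ)'(s + α)`. On each of the two intervals the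
denominator `c cos s + 1` has a constant sign and vanishes at both ends, while `c sin s` does not,
so `h` runs from `-∞` to `+∞` across the interval. Moreover
`h' = c (c + cos s) / (c cos s + 1)² ≥ c / (1 + c) > G'`, so `G - h` is strictly decreasing from
`+∞` to `-∞` and has exactly one zero by the intermediate value theorem.
-/

open Real Filter Set Topology

lemma exists_mem_Ioo_eq_zero_of_tendsto {a b : ℝ} (hab : a < b) {F : ℝ → ℝ}
    (hF : ContinuousOn F (Ioo a b)) (ha : Tendsto F (𝓝[>] a) atTop)
    (hb : Tendsto F (𝓝[<] b) atBot) : ∃ s ∈ Ioo a b, F s = 0 := by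
  obtain ⟨s₁, hFs₁, hs₁⟩ := ((ha.eventually_ge_atTop 0).and (Ioo_mem_nhdsGT hab)).exists
  obtain ⟨s₂, hFs₂, hs₂⟩ := ((hb.eventually_le_atBot 0).and (Ioo_mem_nhdsLT hab)).exists
  have hsub : uIcc s₁ s₂ ⊆ Ioo a b := ordConnected_Ioo.uIcc_subset hs₁ hs₂
  obtain ⟨s, hs, hFs⟩ := intermediate_value_uIcc (hF.mono hsub) (mem_uIcc.2 (.inr ⟨hFs₂, hFs₁⟩))
  exact ⟨s, hsub hs, hFs⟩

lemma Filter.Tendsto.pos_div_nhdsGT_zero {α : Type*} {l : Filter α} {n d : α → ℝ} {L : ℝ}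
    (hL : 0 < L) (hn : Tendsto n l (𝓝 L)) (hd : Tendsto d l (𝓝[>] 0)) :
    Tendsto (fun x => n x / d x) l atTop := by
  simpa only [div_eq_mul_inv, Function.comp_def] using
    hn.pos_mul_atTop hL (tendsto_inv_nhdsGT_zero.comp hd)

noncomputable def sinRatio (c s : ℝ) : ℝ := c * sin s / (c * cos s + 1)

lemma hasDerivAt_sinRatio {c s : ℝ} (hs : c * cos s + 1 ≠ 0) :
    HasDerivAt (sinRatio c) (c * (c + cos s) / (c * cos s + 1) ^ 2) s := by
  refine (((hasDerivAt_sin s).const_mul c).div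
    (((hasDerivAt_cos s).const_mul c).add_const 1) hs).congr_deriv ?_
  congr 1
  linear_combination c ^ 2 * sin_sq_add_cos_sq s

lemma div_one_add_le_deriv_sinRatio {c s : ℝ} (hc : 1 ≤ c) (hs : c * cos s + 1 ≠ 0) :
    c / (1 + c) ≤ c * (c + cos s) / (c * cos s + 1) ^ 2 := by
  rw [div_le_div_iff₀ (by linarith) (by positivity)]
  have h1 := cos_le_one s
  have h2 := neg_one_le_cos s
  -- `(1 + c)(c + x) - (c x + 1)² = (1 - x)(c²(1 + x) + c - 1)`
  nlinarith [mul_nonneg (sub_nonneg.2 h1) (by nlinarith : (0 : ℝ) ≤ c ^ 2 * (1 + cos s) + c - 1)]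

section Endpoint

variable {l : Filter ℝ} {c x σ : ℝ}

lemma tendsto_mul_cos_add_one_nhdsGT_zero (hl : l ≤ 𝓝 x) (hx : c * cos x + 1 = 0)
    (hσ : ∀ᶠ s in l, 0 < σ * (c * cos s + 1)) :
    Tendsto (fun s => σ * (c * cos s + 1)) l (𝓝[>] 0) := by
  refine tendsto_nhdsWithin_iff.2 ⟨?_, hσ⟩
  have hcont : Tendsto (fun s => σ * (c * cos s + 1)) (𝓝 x) (𝓝 (σ * (c * cos x + 1))) :=
    (continuous_const.mul ((continuous_const.mul continuous_cos).add continuous_const)).tendsto x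
  simpa only [hx, mul_zero] using hcont.mono_left hl

lemma tendsto_sinRatio_atTop (hl : l ≤ 𝓝 x) (hx : c * cos x + 1 = 0)
    (hσ : ∀ᶠ s in l, 0 < σ * (c * cos s + 1)) (hsin : 0 < σ * (c * sin x)) :
    Tendsto (sinRatio c) l atTop := by
  have hσ0 : σ ≠ 0 := left_ne_zero_of_mul hsin.ne'
  have hnum : Tendsto (fun s => σ * (c * sin s)) l (𝓝 (σ * (c * sin x))) :=
    ((continuous_const.mul (continuous_const.mul continuous_sin)).tendsto x).mono_left hl
  convert hnum.pos_div_nhdsGT_zero hsin (tendsto_mul_cos_add_one_nhdsGT_zero hl hx hσ) using 2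
  exact (mul_div_mul_left _ _ hσ0).symm

lemma tendsto_sinRatio_atBot (hl : l ≤ 𝓝 x) (hx : c * cos x + 1 = 0)
    (hσ : ∀ᶠ s in l, 0 < σ * (c * cos s + 1)) (hsin : σ * (c * sin x) < 0) :
    Tendsto (sinRatio c) l atBot := by
  have hσ0 : σ ≠ 0 := left_ne_zero_of_mul hsin.ne
  have hnum : Tendsto (fun s => -(σ * (c * sin s))) l (𝓝 (-(σ * (c * sin x)))) :=
    ((continuous_const.mul (continuous_const.mul continuous_sin)).neg.tendsto x).mono_left hl
  refine (tendsto_neg_atTop_atBot.comp <| hnum.pos_div_nhdsGT_zero (neg_pos.2 hsin)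
    (tendsto_mul_cos_add_one_nhdsGT_zero hl hx hσ)).congr fun s => ?_
  simp only [Function.comp_apply, neg_div, neg_neg, sinRatio, mul_div_mul_left _ _ hσ0]

end Endpoint

theorem existsUnique_mem_Ioo_eq_sinRatio {c a b σ : ℝ} (hc : 1 ≤ c) (hab : a < b)
    (ha : c * cos a + 1 = 0) (hb : c * cos b + 1 = 0)
    (hσa : σ * (c * sin a) < 0) (hσb : 0 < σ * (c * sin b))
    (hσ : ∀ s ∈ Ioo a b, 0 < σ * (c * cos s + 1))
    {G : ℝ → ℝ} (hG : Differentiable ℝ G) (hG' : ∀ s ∈ Ioo a b, deriv G s < c / (1 + c)) :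
    ∃! s, s ∈ Ioo a b ∧ G s = sinRatio c s := by
  have hne : ∀ s ∈ Ioo a b, c * cos s + 1 ≠ 0 := fun s hs h0 => by
    simpa only [h0, mul_zero, lt_irrefl] using hσ s hs
  set F : ℝ → ℝ := fun s => G s - sinRatio c s
  have hF' : ∀ s ∈ Ioo a b, HasDerivAt F (deriv G s - c * (c + cos s) / (c * cos s + 1) ^ 2) s :=
    fun s hs => (hG s).hasDerivAt.sub (hasDerivAt_sinRatio (hne s hs))
  have hFc : ContinuousOn F (Ioo a b) := fun s hs => (hF' s hs).continuousAt.continuousWithinAt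
  have hanti : StrictAntiOn F (Ioo a b) := by
    refine strictAntiOn_of_deriv_neg (convex_Ioo a b) hFc fun s hs => ?_
    rw [interior_Ioo] at hs
    rw [(hF' s hs).deriv, sub_neg]
    exact (hG' s hs).trans_le (div_one_add_le_deriv_sinRatio hc (hne s hs))
  have hGa : Tendsto G (𝓝[>] a) (𝓝 (G a)) := (hG a).continuousAt.mono_left nhdsWithin_le_nhds
  have hGb : Tendsto G (𝓝[<] b) (𝓝 (G b)) := (hG b).continuousAt.mono_left nhdsWithin_le_nhds
  have hFa : Tendsto F (𝓝[>] a) atTop := by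
    refine (hGa.add_atTop (tendsto_neg_atBot_atTop.comp ?_)).congr
      fun s => (sub_eq_add_neg _ _).symm
    exact tendsto_sinRatio_atBot nhdsWithin_le_nhds ha
      (eventually_of_mem (Ioo_mem_nhdsGT hab) hσ) hσa
  have hFb : Tendsto F (𝓝[<] b) atBot := by
    refine (hGb.add_atBot (tendsto_neg_atTop_atBot.comp ?_)).congr
      fun s => (sub_eq_add_neg _ _).symm
    exact tendsto_sinRatio_atTop nhdsWithin_le_nhds hb
      (eventually_of_mem (Ioo_mem_nhdsLT hab) hσ) hσb
  obtain ⟨s, hs, hFs⟩ := exists_mem_Ioo_eq_zero_of_tendsto hab hFc hFa hFb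
  refine ⟨s, ⟨hs, sub_eq_zero.1 hFs⟩, fun t ht => hanti.injOn ht.1 hs ?_⟩
  simp only [F, ht.2, hFs, sub_self]

theorem existsUnique_mem_Ioo_sub_pi_pi_sub_eq_sinRatio {c θ : ℝ} (hc : 1 ≤ c) (hθ : θ ∈ Ioo 0 π)
    (hcθ : c * cos θ = 1) {G : ℝ → ℝ} (hG : Differentiable ℝ G)
    (hG' : ∀ s, deriv G s < c / (1 + c)) :
    ∃! s, s ∈ Ioo (θ - π) (π - θ) ∧ G s = sinRatio c s := by
  have hsin := sin_pos_of_pos_of_lt_pi hθ.1 hθ.2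
  refine existsUnique_mem_Ioo_eq_sinRatio (σ := 1) hc (by linarith [hθ.2]) ?_ ?_ ?_ ?_ ?_ hG
    fun s _ => hG' s
  · rw [cos_sub_pi]; linarith
  · rw [cos_pi_sub]; linarith
  · rw [sin_sub_pi]; nlinarith
  · rw [sin_pi_sub]; nlinarith
  · intro s hs
    have := cos_lt_cos_of_nonneg_of_le_pi (abs_nonneg s) (by linarith [hθ.1])
      (abs_lt.2 ⟨by linarith [hs.1], hs.2⟩)
    rw [cos_abs, cos_pi_sub] at this
    nlinarith

theorem existsUnique_mem_Ioo_pi_sub_pi_add_eq_sinRatio {c θ : ℝ} (hc : 1 ≤ c) (hθ : θ ∈ Ioo 0 π)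
    (hcθ : c * cos θ = 1) {G : ℝ → ℝ} (hG : Differentiable ℝ G)
    (hG' : ∀ s, deriv G s < c / (1 + c)) :
    ∃! s, s ∈ Ioo (π - θ) (π + θ) ∧ G s = sinRatio c s := by
  have hsin := sin_pos_of_pos_of_lt_pi hθ.1 hθ.2
  refine existsUnique_mem_Ioo_eq_sinRatio (σ := -1) hc (by linarith [hθ.1]) ?_ ?_ ?_ ?_ ?_ hG
    fun s _ => hG' s
  · rw [cos_pi_sub]; linarith
  · rw [add_comm π θ, cos_add_pi]; linarith
  · rw [sin_pi_sub]; nlinarith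
  · rw [add_comm π θ, sin_add_pi]; nlinarith
  · intro s hs
    have := cos_lt_cos_of_nonneg_of_le_pi (abs_nonneg (s - π)) hθ.2.le
      (abs_lt.2 ⟨by linarith [hs.1], by linarith [hs.2]⟩)
    rw [cos_abs, cos_sub_pi] at this
    nlinarith

theorem stmt_4_general (q : ℝ) (hq : 1 < q) (ρ : ℝ → ℝ)
    (hC2 : ContDiff ℝ 2 ρ) (hpos : ∀ t, 0 < ρ t)
    (hadm : ∀ t, deriv (deriv (fun s => Real.log (ρ s))) t < Real.sqrt q / (1 + Real.sqrt q))
    (α : ℝ) :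
    (∃! θ : ℝ, θ - α ∈ Set.Ioo (Real.arccos (1 / Real.sqrt q) - π) (π - Real.arccos (1 / Real.sqrt q)) ∧
      deriv (fun s => Real.log (ρ s)) θ =
        Real.sqrt q * Real.sin (θ - α) / (Real.sqrt q * Real.cos (θ - α) + 1)) ∧
    (∃! θ : ℝ, θ - α ∈ Set.Ioo (π - Real.arccos (1 / Real.sqrt q)) (π + Real.arccos (1 / Real.sqrt q)) ∧
      deriv (fun s => Real.log (ρ s)) θ =
        Real.sqrt q * Real.sin (θ - α) / (Real.sqrt q * Real.cos (θ - α) + 1)) := by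
  set L := fun s => Real.log (ρ s)
  have hc : 1 < √q := by simpa using Real.sqrt_lt_sqrt zero_le_one hq
  have hc₀ : 0 < √q := one_pos.trans hc
  have hθ : arccos (1 / √q) ∈ Ioo 0 π :=
    ⟨arccos_pos.2 ((div_lt_one hc₀).2 hc), arccos_lt_pi.2 (by linarith [one_div_pos.2 hc₀])⟩
  have hcθ : √q * cos (arccos (1 / √q)) = 1 := by
    rw [cos_arccos (by linarith [one_div_pos.2 hc₀]) ((div_le_one hc₀).2 hc.le)]
    field_simp
  have hG : Differentiable ℝ fun s => deriv L (s + α) :=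
    (((hC2.log fun s => (hpos s).ne').deriv' (n := 1)).differentiable one_ne_zero).comp
      (differentiable_id.add_const α)
  have hG' : ∀ s, deriv (fun s => deriv L (s + α)) s < √q / (1 + √q) := fun s => by
    rw [deriv_comp_add_const]; exact hadm _
  have shift : ∀ I : Set ℝ, (∃! s, s ∈ I ∧ deriv L (s + α) = sinRatio √q s) →
      ∃! θ, θ - α ∈ I ∧ deriv L θ = sinRatio √q (θ - α) := fun I h =>
    (existsUnique_congr fun θ => by rw [Equiv.subRight_apply, sub_add_cancel]).1
      ((Equiv.subRight α).existsUnique_congr_right.2 h)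
  exact ⟨shift _ (existsUnique_mem_Ioo_sub_pi_pi_sub_eq_sinRatio hc.le hθ hcθ hG hG'),
    shift _ (existsUnique_mem_Ioo_pi_sub_pi_add_eq_sinRatio hc.le hθ hcθ hG hG')⟩

theorem stmt_4 (q : ℝ) (hq : 1 < q) (ρ : ℝ → ℝ)
    (hC2 : ContDiff ℝ 2 ρ) (hpos : ∀ t, 0 < ρ t)
    (hper : ∀ t, ρ (t + 2 * π) = ρ t)
    (hadm : ∀ t, deriv (deriv (fun s => Real.log (ρ s))) t < Real.sqrt q / (1 + Real.sqrt q))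
    (α : ℝ) :
    (∃! θ : ℝ, θ - α ∈ Set.Ioo (Real.arccos (1 / Real.sqrt q) - π) (π - Real.arccos (1 / Real.sqrt q)) ∧
      deriv (fun s => Real.log (ρ s)) θ =
        Real.sqrt q * Real.sin (θ - α) / (Real.sqrt q * Real.cos (θ - α) + 1)) ∧
    (∃! θ : ℝ, θ - α ∈ Set.Ioo (π - Real.arccos (1 / Real.sqrt q)) (π + Real.arccos (1 / Real.sqrt q)) ∧
      deriv (fun s => Real.log (ρ s)) θ =
        Real.sqrt q * Real.sin (θ - α) / (Real.sqrt q * Real.cos (θ - α) + 1)) :=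
  stmt_4_general q hq ρ hC2 hpos hadm α
end

section
/- For q > 1, the function h_π(s) = √q·sin(s−π)/(√q·cos(s−π)+1) satisfies 0 < |h(s)| < |h_π(s)| for all s ∈ (−θ_q, θ_q) \ {0}, where θ_q = arccos(1/√q) and h(s) = √q·sin s/(√q·cos s + 1). -/
open Real

theorem stmt_6 (q : ℝ) (hq : 1 < q) (s : ℝ)
    (hs : s ∈ Set.Ioo (-Real.arccos (1 / Real.sqrt q)) (Real.arccos (1 / Real.sqrt q)))
    (hs0 : s ≠ 0) :
    0 < |Real.sqrt q * Real.sin s / (Real.sqrt q * Real.cos s + 1)| ∧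
    |Real.sqrt q * Real.sin s / (Real.sqrt q * Real.cos s + 1)| <
      |Real.sqrt q * Real.sin (s - π) / (Real.sqrt q * Real.cos (s - π) + 1)| := by
  obtain ⟨hs1, hs2⟩ := hs
  set a := Real.sqrt q with ha_def
  have ha : 1 < a := by
    rw [ha_def, show (1:ℝ) = Real.sqrt 1 by simp]
    exact Real.sqrt_lt_sqrt (by norm_num) hq
  have ha0 : 0 < a := by linarith
  have h1a : 0 < 1/a := by positivity
  have h1a1 : 1/a < 1 := by
    rw [div_lt_one ha0]; linarith
  -- bound on arccos
  have hθπ : Real.arccos (1/a) < π/2 := by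
    have := Real.arccos_lt_pi_div_two (x := 1/a)
    rw [this]; exact h1a
  have habs : |s| < Real.arccos (1/a) := abs_lt.mpr ⟨hs1, hs2⟩
  -- cos s > 1/a
  have hcos : 1/a < Real.cos s := by
    rw [← Real.cos_abs s]
    have h1 : Real.cos (Real.arccos (1/a)) < Real.cos |s| := by
      apply Real.cos_lt_cos_of_nonneg_of_le_pi (abs_nonneg s) _ habs
      linarith [Real.arccos_le_pi (1/a), Real.pi_pos]
    rwa [Real.cos_arccos (by linarith) (by linarith)] at h1
  have hca : 1 < a * Real.cos s := by
    rw [div_lt_iff₀ ha0] at hcos; linarith [hcos]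
  have hD1 : 0 < a * Real.cos s + 1 := by linarith
  have hsin : Real.sin s ≠ 0 := by
    intro h
    have hπ : |s| < π := lt_trans habs (by linarith [Real.pi_pos, hθπ])
    rw [abs_lt] at hπ
    exact hs0 ((Real.sin_eq_zero_iff_of_lt_of_lt hπ.1 hπ.2).mp h)
  have hN : 0 < |a * Real.sin s| := by
    rw [abs_pos]; positivity
  constructor
  · rw [abs_div, abs_of_pos hD1]
    positivity
  · rw [Real.sin_sub_pi, Real.cos_sub_pi]
    have heq : a * -Real.cos s + 1 = -(a * Real.cos s - 1) := by ring
    rw [heq, mul_neg, neg_div_neg_eq, abs_div, abs_div,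
      abs_of_pos hD1, abs_of_pos (by linarith : (0:ℝ) < a * Real.cos s - 1)]
    exact div_lt_div_of_pos_left hN (by linarith) (by linarith)
end

section
/- Let 0 < e < 1 and let f(t) = e²·(1 − (2 − e²)·cos² t)/(1 − e²·cos² t)². If 0 < e² ≤ 2/3 then max over t of f(t) equals e², attained when cos t = 0. If 2/3 < e² < 1 then max over t of f(t) equals (2 − e²)²/(8·(1 − e²)), which is strictly greater than e². -/
open Real

theorem stmt_10 (e : ℝ) (he : 0 < e) (he1 : e < 1) :
    (e ^ 2 ≤ 2 / 3 →
      IsGreatest (Set.range (fun t => e ^ 2 * (1 - (2 - e ^ 2) * Real.cos t ^ 2) /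
        (1 - e ^ 2 * Real.cos t ^ 2) ^ 2)) (e ^ 2) ∧
      ∀ t : ℝ, Real.cos t = 0 →
        e ^ 2 * (1 - (2 - e ^ 2) * Real.cos t ^ 2) / (1 - e ^ 2 * Real.cos t ^ 2) ^ 2 = e ^ 2) ∧
    (2 / 3 < e ^ 2 →
      IsGreatest (Set.range (fun t => e ^ 2 * (1 - (2 - e ^ 2) * Real.cos t ^ 2) /
        (1 - e ^ 2 * Real.cos t ^ 2) ^ 2)) ((2 - e ^ 2) ^ 2 / (8 * (1 - e ^ 2))) ∧
      e ^ 2 < (2 - e ^ 2) ^ 2 / (8 * (1 - e ^ 2)) ∧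
      ∀ t : ℝ, Real.cos t ^ 2 = (3 * e ^ 2 - 2) / (e ^ 2 * (2 - e ^ 2)) →
        e ^ 2 * (1 - (2 - e ^ 2) * Real.cos t ^ 2) / (1 - e ^ 2 * Real.cos t ^ 2) ^ 2 =
          (2 - e ^ 2) ^ 2 / (8 * (1 - e ^ 2))) := by
  have he2 : e ^ 2 < 1 := by nlinarith
  have hcomp : ∀ t : ℝ, Real.cos t = 0 →
      e ^ 2 * (1 - (2 - e ^ 2) * Real.cos t ^ 2) / (1 - e ^ 2 * Real.cos t ^ 2) ^ 2 = e ^ 2 := by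
    intro t ht
    rw [ht]
    norm_num
  constructor
  · intro h23
    refine ⟨⟨⟨Real.pi / 2, by simp⟩, ?_⟩, hcomp⟩
    rintro y ⟨t, rfl⟩
    simp only
    have hc : Real.cos t ^ 2 ≤ 1 := Real.cos_sq_le_one t
    have hd : 0 < 1 - e ^ 2 * Real.cos t ^ 2 := by nlinarith [sq_nonneg (Real.cos t)]
    rw [div_le_iff₀ (by positivity)]
    nlinarith [sq_nonneg (Real.cos t), sq_nonneg (e * Real.cos t),
      sq_nonneg (e ^ 2 * Real.cos t ^ 2), sq_nonneg (Real.cos t ^ 2)]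
  · intro h23
    have h2e : (0:ℝ) < 2 - e ^ 2 := by nlinarith
    have h3e : (0:ℝ) < 3 * e ^ 2 - 2 := by nlinarith
    have h1e : (0:ℝ) < 1 - e ^ 2 := by nlinarith
    set x : ℝ := (3 * e ^ 2 - 2) / (e ^ 2 * (2 - e ^ 2)) with hx
    have hxpos : 0 < x := by positivity
    have hx1 : x ≤ 1 := by
      rw [hx, div_le_one (by positivity)]
      nlinarith
    have heq : ∀ t : ℝ, Real.cos t ^ 2 = x →
        e ^ 2 * (1 - (2 - e ^ 2) * Real.cos t ^ 2) / (1 - e ^ 2 * Real.cos t ^ 2) ^ 2 =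
          (2 - e ^ 2) ^ 2 / (8 * (1 - e ^ 2)) := by
      intro t ht
      have hd : 1 - e ^ 2 * Real.cos t ^ 2 = 4 * (1 - e ^ 2) / (2 - e ^ 2) := by
        rw [ht, hx]; field_simp; ring
      have hn : 1 - (2 - e ^ 2) * Real.cos t ^ 2 = 2 * (1 - e ^ 2) / e ^ 2 := by
        rw [ht, hx]; field_simp; ring
      rw [hd, hn]
      field_simp
      ring
    constructor
    · constructor
      · refine ⟨Real.arccos (Real.sqrt x), ?_⟩
        simp only
        have hs1 : Real.sqrt x ≤ 1 := by
          rw [show (1:ℝ) = Real.sqrt 1 by simp]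
          exact Real.sqrt_le_sqrt hx1
        have hcos : Real.cos (Real.arccos (Real.sqrt x)) = Real.sqrt x :=
          Real.cos_arccos (by linarith [Real.sqrt_nonneg x]) hs1
        have : Real.cos (Real.arccos (Real.sqrt x)) ^ 2 = x := by
          rw [hcos, Real.sq_sqrt hxpos.le]
        exact heq _ this
      · rintro y ⟨t, rfl⟩
        simp only
        have hc : Real.cos t ^ 2 ≤ 1 := Real.cos_sq_le_one t
        have hd : 0 < 1 - e ^ 2 * Real.cos t ^ 2 := by nlinarith [sq_nonneg (Real.cos t)]
        rw [div_le_div_iff₀ (by positivity) (by positivity)]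
        nlinarith [sq_nonneg ((2 - e ^ 2) * e ^ 2 * Real.cos t ^ 2 - (3 * e ^ 2 - 2))]
    · refine ⟨?_, heq⟩
      rw [lt_div_iff₀ (by positivity)]
      nlinarith [sq_nonneg (3 * e ^ 2 - 2)]
end

section
/- Let 0 < e < 1 and g(θ) = e·(e + cos θ)/(1 + e·cos θ)². If e < 1/2 then max over θ of g(θ) equals e/(1 + e), attained at θ = 0. If 1/2 ≤ e < 1 then max over θ of g(θ) equals 1/(4·(1 − e²)), attained when cos θ = 1/e − 2e. -/
open Real

theorem stmt_12 (e : ℝ) (he : 0 < e) (he1 : e < 1) :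
    (e < 1 / 2 →
      IsGreatest (Set.range (fun θ => e * (e + Real.cos θ) / (1 + e * Real.cos θ) ^ 2))
        (e / (1 + e)) ∧
      e * (e + Real.cos 0) / (1 + e * Real.cos 0) ^ 2 = e / (1 + e)) ∧
    (1 / 2 ≤ e →
      IsGreatest (Set.range (fun θ => e * (e + Real.cos θ) / (1 + e * Real.cos θ) ^ 2))
        (1 / (4 * (1 - e ^ 2))) ∧
      ∀ θ : ℝ, Real.cos θ = 1 / e - 2 * e →
        e * (e + Real.cos θ) / (1 + e * Real.cos θ) ^ 2 = 1 / (4 * (1 - e ^ 2))) := by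
  have hub : ∀ θ : ℝ, 0 < 1 + e * Real.cos θ := by
    intro θ
    nlinarith [Real.neg_one_le_cos θ, Real.cos_le_one θ]
  have he0 : e ≠ 0 := ne_of_gt he
  have h1e : (0:ℝ) < 1 + e := by linarith
  have hee : (0:ℝ) < 1 - e ^ 2 := by nlinarith
  constructor
  · intro h
    have heq0 : e * (e + Real.cos 0) / (1 + e * Real.cos 0) ^ 2 = e / (1 + e) := by
      rw [Real.cos_zero]
      rw [div_eq_div_iff (by positivity) (by linarith)]
      ring
    refine ⟨⟨⟨0, heq0⟩, ?_⟩, heq0⟩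
    rintro x ⟨θ, rfl⟩
    have h1 := hub θ
    have hc1 := Real.cos_le_one θ
    have hc2 := Real.neg_one_le_cos θ
    simp only
    rw [div_le_div_iff₀ (by positivity) h1e]
    have key : (0:ℝ) ≤ (1 - Real.cos θ) * (1 - e - e ^ 2 - e ^ 2 * Real.cos θ) := by
      apply mul_nonneg (by linarith)
      nlinarith
    nlinarith [mul_nonneg key he.le]
  · intro h
    have hc : -1 ≤ 1 / e - 2 * e ∧ 1 / e - 2 * e ≤ 1 := by
      constructor
      · rw [← sub_nonneg, show (1 / e - 2 * e - -1) = (1 - 2 * e ^ 2 + e) / e by field_simp; ring]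
        apply div_nonneg _ he.le
        nlinarith
      · rw [← sub_nonneg, show (1 - (1 / e - 2 * e)) = (2 * e ^ 2 + e - 1) / e by field_simp; ring]
        apply div_nonneg _ he.le
        nlinarith
    have hval : ∀ θ : ℝ, Real.cos θ = 1 / e - 2 * e →
        e * (e + Real.cos θ) / (1 + e * Real.cos θ) ^ 2 = 1 / (4 * (1 - e ^ 2)) := by
      intro θ hθ
      rw [hθ]
      have h1 : (1 + e * (1 / e - 2 * e)) = 2 * (1 - e ^ 2) := by field_simp; ring
      rw [h1, div_eq_div_iff (by positivity) (by positivity)]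
      field_simp
      ring
    refine ⟨⟨⟨Real.arccos (1 / e - 2 * e), ?_⟩, ?_⟩, hval⟩
    · exact hval _ (Real.cos_arccos hc.1 hc.2)
    · rintro x ⟨θ, rfl⟩
      have h1 := hub θ
      have hc1 := Real.cos_le_one θ
      have hc2 := Real.neg_one_le_cos θ
      simp only
      rw [div_le_div_iff₀ (by positivity) (by positivity)]
      nlinarith [sq_nonneg (e * Real.cos θ - 1 + 2 * e ^ 2)]
end

section
/- Let q > 1 and 0 < e < 1. The inequality max over θ of e·(e + cos θ)/(1 + e·cos θ)² < √q/(1 + √q) holds if and only if 4e² < 3 − 1/√q. -/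
open Real

theorem stmt_13 (q e : ℝ) (hq : 1 < q) (he : 0 < e) (he1 : e < 1) :
    (∀ θ : ℝ, e * (e + Real.cos θ) / (1 + e * Real.cos θ) ^ 2 <
        Real.sqrt q / (1 + Real.sqrt q)) ↔
      4 * e ^ 2 < 3 - 1 / Real.sqrt q := by
  set s := Real.sqrt q with hsdef
  have hs : 1 < s := by
    rw [hsdef, show (1:ℝ) = Real.sqrt 1 by simp]
    exact Real.sqrt_lt_sqrt (by norm_num) hq
  have hs0 : 0 < s := by linarith
  have hrw : (3 - 1/s) = (3*s-1)/s := by field_simp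
  constructor
  · intro h
    rw [hrw, lt_div_iff₀ hs0]
    rcases lt_or_ge e (1/2) with he2 | he2
    · nlinarith [mul_pos hs0 (show (0:ℝ) < 1 - 4*e^2 by nlinarith)]
    · have hc1 : (1 - 2*e^2)/e ≤ 1 := by
        rw [div_le_one he]; nlinarith
      have hc2 : -1 ≤ (1 - 2*e^2)/e := by
        rw [le_div_iff₀ he]; nlinarith
      have h2 := h (Real.arccos ((1 - 2*e^2)/e))
      rw [Real.cos_arccos hc2 hc1] at h2
      have he1' : (0:ℝ) < 1 - e^2 := by nlinarith
      have hden : 1 + e * ((1 - 2*e^2)/e) = 2*(1-e^2) := by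
        field_simp; ring
      have key : e * (e + (1 - 2*e^2)/e) / (1 + e * ((1 - 2*e^2)/e)) ^ 2
          = 1 / (4*(1-e^2)) := by
        rw [hden, div_eq_div_iff (by positivity) (by positivity)]
        field_simp
        ring
      rw [key, div_lt_div_iff₀ (by positivity) (by linarith)] at h2
      nlinarith
  · intro h θ
    rw [hrw, lt_div_iff₀ hs0] at h
    have hc1 : Real.cos θ ≤ 1 := Real.cos_le_one θ
    have hc2 : -1 ≤ Real.cos θ := Real.neg_one_le_cos θ
    have hpos : 0 < 1 + e * Real.cos θ := by nlinarith
    rw [div_lt_div_iff₀ (by positivity) (by linarith)]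
    nlinarith [sq_nonneg (2*s*e*Real.cos θ + s - 1)]
end

section
/- Let s > 1 and g(θ) = −s²·cos θ/(s² − sin² θ)^{3/2}. If s ≥ √3 then max over θ of g(θ) equals 1/s, attained at θ = π. If 1 < s < √3 then max over θ of g(θ) equals (2/(3√3))·s²/(s² − 1), attained where cos θ = −√((s² − 1)/2). Moreover, in both cases min over θ of g(θ) = −max over θ of g(θ). -/
open Real

lemma le_of_sq_le'' (k p : ℝ) (hp : 0 ≤ p) (h : k^2 ≤ p^2) (hk : 0 ≤ k) : k ≤ p := by nlinarith

lemma poly1 (t u : ℝ) (ht : 3 ≤ t) (hu : 0 ≤ u) (hu1 : u ≤ 1) : u * t^3 ≤ (t-1+u)^3 := by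
  nlinarith [sq_nonneg (t-1+u), sq_nonneg (u-1), mul_nonneg hu (sub_nonneg.2 hu1), sq_nonneg (t-3), mul_nonneg (sub_nonneg.2 hu1) (sub_nonneg.2 ht)]

lemma poly2 (a u : ℝ) (ha : 0 < a) (hu : 0 ≤ u) : 27 * a^2 * u ≤ 4 * (a+u)^3 := by
  nlinarith [mul_nonneg (sq_nonneg (2*u-a)) (by linarith : (0:ℝ) ≤ u + 4*a)]

lemma rpow32 (x : ℝ) (hx : 0 < x) : x ^ ((3:ℝ)/2) = x * Real.sqrt x := by
  rw [Real.sqrt_eq_rpow, show (3:ℝ)/2 = 1 + 1/2 by norm_num, Real.rpow_add hx, Real.rpow_one]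

lemma bound1 (s c : ℝ) (hs : 1 < s) (h3 : 3 ≤ s^2) (hc : c^2 ≤ 1) :
    -s^2 * c ≤ (1/s) * ((s^2 - 1 + c^2) * Real.sqrt (s^2 - 1 + c^2)) := by
  have hs0 : 0 < s := by linarith
  have hx : 0 < s^2 - 1 + c^2 := by nlinarith [sq_nonneg c]
  set y := Real.sqrt (s^2 - 1 + c^2) with hy
  have hy0 : 0 ≤ y := Real.sqrt_nonneg _
  have hy2 : y^2 = s^2 - 1 + c^2 := Real.sq_sqrt hx.le
  have key : -s^3 * c ≤ y^3 := by
    rcases le_or_gt c 0 with h | h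
    · apply le_of_sq_le'' _ _ (by positivity)
      · calc (-s^3*c)^2 = c^2 * (s^2)^3 := by ring
          _ ≤ (s^2-1+c^2)^3 := poly1 (s^2) (c^2) h3 (sq_nonneg c) hc
          _ = (y^3)^2 := by rw [show (y^3)^2 = (y^2)^3 by ring, hy2]
      · nlinarith [mul_nonneg (pow_pos hs0 3).le (neg_nonneg.2 h)]
    · nlinarith [pow_nonneg hy0 3, mul_pos (pow_pos hs0 3) h]
  rw [show (1/s) * ((s^2-1+c^2)*y) = (y^2*y)/s by rw [hy2]; ring, le_div_iff₀ hs0]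
  nlinarith [key]

lemma bound2 (s c : ℝ) (hs : 1 < s) (h3 : s^2 < 3) (hc : c^2 ≤ 1) :
    -s^2 * c ≤ (2/(3*Real.sqrt 3) * (s^2/(s^2-1))) * ((s^2 - 1 + c^2) * Real.sqrt (s^2 - 1 + c^2)) := by
  have hs0 : 0 < s := by linarith
  have ha : 0 < s^2 - 1 := by nlinarith
  have hx : 0 < s^2 - 1 + c^2 := by nlinarith [sq_nonneg c]
  have hr0 : 0 < Real.sqrt 3 := Real.sqrt_pos.2 (by norm_num)
  have hr2 : (Real.sqrt 3)^2 = 3 := Real.sq_sqrt (by norm_num)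
  set r := Real.sqrt 3
  set y := Real.sqrt (s^2 - 1 + c^2) with hy
  have hy0 : 0 ≤ y := Real.sqrt_nonneg _
  have hy2 : y^2 = s^2 - 1 + c^2 := Real.sq_sqrt hx.le
  have key : -3 * r * (s^2-1) * c ≤ 2 * y^3 := by
    rcases le_or_gt c 0 with h | h
    · apply le_of_sq_le'' _ _ (by positivity)
      · calc (-3*r*(s^2-1)*c)^2 = (r^2/3) * (27 * (s^2-1)^2 * c^2) := by ring
          _ = 27 * (s^2-1)^2 * c^2 := by rw [hr2]; ring
          _ ≤ 4 * ((s^2-1)+c^2)^3 := poly2 (s^2-1) (c^2) ha (sq_nonneg c)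
          _ = (2*y^3)^2 := by rw [show (2*y^3)^2 = 4*(y^2)^3 by ring, hy2]
      · nlinarith [mul_nonneg (mul_nonneg hr0.le ha.le) (neg_nonneg.2 h)]
    · nlinarith [pow_nonneg hy0 3, mul_pos (mul_pos hr0 ha) h]
  have hexp : (2/(3*r) * (s^2/(s^2-1))) * ((s^2-1+c^2)*y) = (2*s^2*(y^2*y))/(3*r*(s^2-1)) := by
    rw [hy2]; field_simp
  rw [hexp, le_div_iff₀ (by positivity)]
  nlinarith [mul_le_mul_of_nonneg_left key (sq_nonneg s)]

-- value at cos θ = -1 (θ = π): s^2/(s^2)^{3/2} = 1/s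
lemma val1 (s : ℝ) (hs : 1 < s) :
    -s^2 * (-1) / ((s^2 - 1 + (-1:ℝ)^2) * Real.sqrt (s^2 - 1 + (-1:ℝ)^2)) = 1/s := by
  have hs0 : 0 < s := by linarith
  have h1 : s^2 - 1 + (-1:ℝ)^2 = s^2 := by ring
  rw [h1, Real.sqrt_sq hs0.le]
  field_simp

lemma val2 (s : ℝ) (hs : 1 < s) (h3 : s^2 < 3) :
    -s^2 * (-Real.sqrt ((s^2-1)/2)) /
      ((s^2 - 1 + (-Real.sqrt ((s^2-1)/2))^2) * Real.sqrt (s^2 - 1 + (-Real.sqrt ((s^2-1)/2))^2)) =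
    (2/(3*Real.sqrt 3)) * (s^2/(s^2-1)) := by
  have ha : 0 < s^2 - 1 := by nlinarith
  have hq : 0 < (s^2-1)/2 := by linarith
  have hc2 : (-Real.sqrt ((s^2-1)/2))^2 = (s^2-1)/2 := by
    rw [neg_pow, Real.sq_sqrt hq.le]; ring
  rw [hc2]
  have hxval : Real.sqrt (s^2 - 1 + (s^2-1)/2) = Real.sqrt 3 * Real.sqrt ((s^2-1)/2) := by
    rw [show s^2 - 1 + (s^2-1)/2 = 3 * ((s^2-1)/2) by ring, Real.sqrt_mul (by norm_num)]
  rw [hxval]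
  have hr0 : 0 < Real.sqrt 3 := Real.sqrt_pos.2 (by norm_num)
  have hr2 : (Real.sqrt 3)^2 = 3 := Real.sq_sqrt (by norm_num)
  have hw0 : 0 < Real.sqrt ((s^2-1)/2) := Real.sqrt_pos.2 hq
  have hw2 : (Real.sqrt ((s^2-1)/2))^2 = (s^2-1)/2 := Real.sq_sqrt hq.le
  set r := Real.sqrt 3
  set w := Real.sqrt ((s^2-1)/2)
  field_simp
  nlinarith [hw2, hr2, mul_pos hr0 hw0, sq_nonneg (r*w)]

theorem stmt_15 (s : ℝ) (hs : 1 < s) :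
    (Real.sqrt 3 ≤ s →
      IsGreatest (Set.range (fun θ => -s ^ 2 * Real.cos θ / (s ^ 2 - Real.sin θ ^ 2) ^ ((3 : ℝ) / 2)))
        (1 / s) ∧
      -s ^ 2 * Real.cos π / (s ^ 2 - Real.sin π ^ 2) ^ ((3 : ℝ) / 2) = 1 / s ∧
      IsLeast (Set.range (fun θ => -s ^ 2 * Real.cos θ / (s ^ 2 - Real.sin θ ^ 2) ^ ((3 : ℝ) / 2)))
        (-(1 / s))) ∧
    (s < Real.sqrt 3 →
      IsGreatest (Set.range (fun θ => -s ^ 2 * Real.cos θ / (s ^ 2 - Real.sin θ ^ 2) ^ ((3 : ℝ) / 2)))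
        ((2 / (3 * Real.sqrt 3)) * (s ^ 2 / (s ^ 2 - 1))) ∧
      (∀ θ : ℝ, Real.cos θ = -Real.sqrt ((s ^ 2 - 1) / 2) →
        -s ^ 2 * Real.cos θ / (s ^ 2 - Real.sin θ ^ 2) ^ ((3 : ℝ) / 2) =
          (2 / (3 * Real.sqrt 3)) * (s ^ 2 / (s ^ 2 - 1))) ∧
      IsLeast (Set.range (fun θ => -s ^ 2 * Real.cos θ / (s ^ 2 - Real.sin θ ^ 2) ^ ((3 : ℝ) / 2)))
        (-((2 / (3 * Real.sqrt 3)) * (s ^ 2 / (s ^ 2 - 1))))) := by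
  have hs0 : 0 < s := by linarith
  have hxpos : ∀ θ : ℝ, 0 < s^2 - 1 + Real.cos θ ^ 2 := fun θ => by
    nlinarith [sq_nonneg (Real.cos θ)]
  have hden : ∀ θ : ℝ, (s ^ 2 - Real.sin θ ^ 2) ^ ((3:ℝ)/2)
      = (s^2 - 1 + Real.cos θ ^ 2) * Real.sqrt (s^2 - 1 + Real.cos θ ^ 2) := by
    intro θ
    have h1 : s ^ 2 - Real.sin θ ^ 2 = s^2 - 1 + Real.cos θ ^ 2 := by
      have := Real.sin_sq_add_cos_sq θ; linarith
    rw [h1, rpow32 _ (hxpos θ)]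
  have hdpos : ∀ θ : ℝ, 0 < (s^2 - 1 + Real.cos θ ^ 2) * Real.sqrt (s^2 - 1 + Real.cos θ ^ 2) :=
    fun θ => mul_pos (hxpos θ) (Real.sqrt_pos.2 (hxpos θ))
  have hodd : ∀ θ : ℝ,
      -s ^ 2 * Real.cos (θ + π) / (s ^ 2 - Real.sin (θ + π) ^ 2) ^ ((3:ℝ)/2)
      = -(-s ^ 2 * Real.cos θ / (s ^ 2 - Real.sin θ ^ 2) ^ ((3:ℝ)/2)) := by
    intro θ
    rw [Real.cos_add_pi, Real.sin_add_pi, neg_pow, show ((-1:ℝ))^2 * Real.sin θ ^2 = Real.sin θ ^ 2 by ring]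
    ring
  constructor
  · intro hge
    have h3 : 3 ≤ s^2 := by
      have := Real.sq_sqrt (by norm_num : (3:ℝ) ≥ 0)
      nlinarith [Real.sqrt_nonneg 3]
    have hub : ∀ θ : ℝ, -s ^ 2 * Real.cos θ / (s ^ 2 - Real.sin θ ^ 2) ^ ((3:ℝ)/2) ≤ 1/s := by
      intro θ
      rw [hden θ, div_le_iff₀ (hdpos θ)]
      exact bound1 s (Real.cos θ) hs h3 (Real.cos_sq_le_one θ)
    have hvpi : -s ^ 2 * Real.cos π / (s ^ 2 - Real.sin π ^ 2) ^ ((3:ℝ)/2) = 1/s := by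
      rw [hden π, Real.cos_pi]
      exact val1 s hs
    refine ⟨⟨⟨π, hvpi⟩, ?_⟩, hvpi, ⟨π + π, by beta_reduce; rw [hodd π, hvpi]⟩, ?_⟩
    · rintro v ⟨θ, rfl⟩; exact hub θ
    · rintro v ⟨θ, rfl⟩
      have := hub (θ + π)
      rw [hodd θ] at this
      linarith
  · intro hlt
    have h3 : s^2 < 3 := by
      have h := Real.sq_sqrt (by norm_num : (3:ℝ) ≥ 0)
      nlinarith [Real.sqrt_nonneg 3]
    have ha : 0 < s^2 - 1 := by nlinarith
    have hq : 0 < (s^2-1)/2 := by linarith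
    have hq1 : (s^2-1)/2 ≤ 1 := by linarith
    have hub : ∀ θ : ℝ, -s ^ 2 * Real.cos θ / (s ^ 2 - Real.sin θ ^ 2) ^ ((3:ℝ)/2)
        ≤ (2 / (3 * Real.sqrt 3)) * (s ^ 2 / (s ^ 2 - 1)) := by
      intro θ
      rw [hden θ, div_le_iff₀ (hdpos θ)]
      exact bound2 s (Real.cos θ) hs h3 (Real.cos_sq_le_one θ)
    have hval : ∀ θ : ℝ, Real.cos θ = -Real.sqrt ((s ^ 2 - 1) / 2) →
        -s ^ 2 * Real.cos θ / (s ^ 2 - Real.sin θ ^ 2) ^ ((3:ℝ)/2)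
        = (2 / (3 * Real.sqrt 3)) * (s ^ 2 / (s ^ 2 - 1)) := by
      intro θ hθ
      rw [hden θ, hθ]
      exact val2 s hs h3
    have hsq1 : Real.sqrt ((s^2-1)/2) ≤ 1 := Real.sqrt_le_one.2 hq1
    have hθ₀ : Real.cos (Real.arccos (-Real.sqrt ((s^2-1)/2))) = -Real.sqrt ((s^2-1)/2) :=
      Real.cos_arccos (by linarith) (by nlinarith [Real.sqrt_nonneg ((s^2-1)/2)])
    set θ₀ := Real.arccos (-Real.sqrt ((s^2-1)/2))
    have hv₀ := hval θ₀ hθ₀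
    refine ⟨⟨⟨θ₀, hv₀⟩, ?_⟩, hval, ⟨θ₀ + π, by beta_reduce; rw [hodd θ₀, hv₀]⟩, ?_⟩
    · rintro v ⟨θ, rfl⟩; exact hub θ
    · rintro v ⟨θ, rfl⟩
      have := hub (θ + π)
      rw [hodd θ] at this
      linarith
end

section
/- Let q > 1 and 1/(1+√q) < s² < 1 with s > 0. For each η = (η₁, η₂) ∈ ℝ² with η₁² + η₂² = 1, every solution ξ = (ξ₁, ξ₂) with ξ₁² + ξ₂² = 1 of the equation √q·(η₁·ξ₂ − s²·η₂·ξ₁) + (1 − s²)·ξ₁·ξ₂ = 0 satisfies: if η₁·η₂ ≠ 0, then |η₁|/|ξ₁| − s²·|η₂|/|ξ₂| = ±(1 − s²)/√q (and in particular ξ₁·ξ₂ ≠ 0). -/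
/-!
Put `A = η₁ / ξ₁`, `B = s² η₂ / ξ₂` and `c = (1 - s²) / √q`; the equation says `A - B = -c`.
The lower bound on `s²` says exactly `c < s²`. If `A` and `B` had opposite signs, both would be
at most `|A - B| = c` in absolute value, and then
`s⁴ = s⁴ (η₁² + η₂²) ≤ (A ξ₁)² + (B ξ₂)² ≤ c² (ξ₁² + ξ₂²) = c² < s⁴`.
Hence `A` and `B` have the same sign and `|A| - |B| = ±(A - B) = ±c`.
-/

open Real

lemma ne_zero_of_stationary {p t η₁ η₂ ξ₁ ξ₂ : ℝ} (hp : p ≠ 0) (ht : t ≠ 0)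
    (hξ : ξ₁ ^ 2 + ξ₂ ^ 2 = 1) (heq : p * (η₁ * ξ₂ - t * η₂ * ξ₁) + (1 - t) * ξ₁ * ξ₂ = 0)
    (hne : η₁ * η₂ ≠ 0) : ξ₁ * ξ₂ ≠ 0 := by
  intro h
  obtain ⟨hη₁, hη₂⟩ := mul_ne_zero_iff.1 hne
  have hlin : η₁ * ξ₂ = t * η₂ * ξ₁ := by
    have : p * (η₁ * ξ₂ - t * η₂ * ξ₁) = 0 := by linear_combination heq - (1 - t) * h
    linear_combination (mul_eq_zero.1 this).resolve_left hp
  have hboth : ξ₁ = 0 ∧ ξ₂ = 0 := by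
    rcases mul_eq_zero.1 h with h₁ | h₂
    · subst h₁
      exact ⟨rfl, by simpa [hη₁] using hlin⟩
    · subst h₂
      exact ⟨by simpa [ht, hη₂, eq_comm] using hlin, rfl⟩
  rw [hboth.1, hboth.2] at hξ
  norm_num at hξ

lemma div_sub_div_eq_of_stationary {p t η₁ η₂ ξ₁ ξ₂ : ℝ} (hp : p ≠ 0) (hξ₁ : ξ₁ ≠ 0)
    (hξ₂ : ξ₂ ≠ 0) (heq : p * (η₁ * ξ₂ - t * η₂ * ξ₁) + (1 - t) * ξ₁ * ξ₂ = 0) :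
    η₁ / ξ₁ - t * η₂ / ξ₂ = -((1 - t) / p) := by
  field_simp
  linear_combination heq

lemma mul_pos_of_unit_of_sq_sub_lt {t a b x₁ x₂ y₁ y₂ : ℝ} (ht : t ^ 2 ≤ 1)
    (hx : x₁ ^ 2 + x₂ ^ 2 = 1) (hy : y₁ ^ 2 + y₂ ^ 2 = 1) (h₁ : y₁ = a * x₁)
    (h₂ : t * y₂ = b * x₂) (hab : (a - b) ^ 2 < t ^ 2) : 0 < a * b := by
  by_contra! hneg
  have : t ^ 2 ≤ (a - b) ^ 2 :=
    calc t ^ 2 = t ^ 2 * y₁ ^ 2 + (t * y₂) ^ 2 := by linear_combination -t ^ 2 * hy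
      _ ≤ y₁ ^ 2 + (t * y₂) ^ 2 := by gcongr; exact mul_le_of_le_one_left (sq_nonneg _) ht
      _ = a ^ 2 * x₁ ^ 2 + b ^ 2 * x₂ ^ 2 := by rw [h₁, h₂]; ring
      _ ≤ (a - b) ^ 2 * x₁ ^ 2 + (a - b) ^ 2 * x₂ ^ 2 := by
        gcongr ?_ * _ + ?_ * _ <;> nlinarith [sq_nonneg a, sq_nonneg b]
      _ = (a - b) ^ 2 := by linear_combination (a - b) ^ 2 * hx
  linarith

lemma abs_sub_abs_eq_or_of_mul_pos {a b : ℝ} (h : 0 < a * b) :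
    |a| - |b| = a - b ∨ |a| - |b| = -(a - b) := by
  rcases pos_and_pos_or_neg_and_neg_of_mul_pos h with ⟨ha, hb⟩ | ⟨ha, hb⟩
  · left
    rw [abs_of_pos ha, abs_of_pos hb]
  · right
    rw [abs_of_neg ha, abs_of_neg hb]
    ring

theorem stmt_17_general (q s : ℝ) (hq : 1 < q)
    (hs1 : 1 / (1 + Real.sqrt q) < s ^ 2) (hs2 : s ^ 2 < 1)
    (η₁ η₂ ξ₁ ξ₂ : ℝ) (hη : η₁ ^ 2 + η₂ ^ 2 = 1) (hξ : ξ₁ ^ 2 + ξ₂ ^ 2 = 1)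
    (heq : Real.sqrt q * (η₁ * ξ₂ - s ^ 2 * η₂ * ξ₁) + (1 - s ^ 2) * ξ₁ * ξ₂ = 0)
    (hne : η₁ * η₂ ≠ 0) :
    ξ₁ * ξ₂ ≠ 0 ∧
    (|η₁| / |ξ₁| - s ^ 2 * |η₂| / |ξ₂| = (1 - s ^ 2) / Real.sqrt q ∨
     |η₁| / |ξ₁| - s ^ 2 * |η₂| / |ξ₂| = -((1 - s ^ 2) / Real.sqrt q)) := by
  have hp : 0 < √q := sqrt_pos.2 (by linarith)
  have hc : 0 < (1 - s ^ 2) / √q := div_pos (by linarith) hp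
  have hcs : (1 - s ^ 2) / √q < s ^ 2 := by
    rw [div_lt_iff₀ hp]
    rw [div_lt_iff₀ (by positivity)] at hs1
    linarith
  have hξ₁₂ := ne_zero_of_stationary hp.ne' (by linarith) hξ heq hne
  obtain ⟨hξ₁, hξ₂⟩ := mul_ne_zero_iff.1 hξ₁₂
  have hkey := div_sub_div_eq_of_stationary hp.ne' hξ₁ hξ₂ heq
  have hsame : 0 < η₁ / ξ₁ * (s ^ 2 * η₂ / ξ₂) := by
    refine mul_pos_of_unit_of_sq_sub_lt (t := s ^ 2) (by nlinarith) hξ hη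
      (div_mul_cancel₀ _ hξ₁).symm (div_mul_cancel₀ _ hξ₂).symm ?_
    rw [hkey, neg_sq]
    exact pow_lt_pow_left₀ hcs hc.le two_ne_zero
  have habs : |η₁| / |ξ₁| - s ^ 2 * |η₂| / |ξ₂| = |η₁ / ξ₁| - |s ^ 2 * η₂ / ξ₂| := by
    rw [abs_div, abs_div, abs_mul, abs_of_nonneg (sq_nonneg s)]
  refine ⟨hξ₁₂, ?_⟩
  rw [habs]
  rcases abs_sub_abs_eq_or_of_mul_pos hsame with h | h
  · exact .inr (h.trans hkey)
  · exact .inl (by rw [h, hkey, neg_neg])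

theorem stmt_17 (q s : ℝ) (hq : 1 < q) (hs : 0 < s)
    (hs1 : 1 / (1 + Real.sqrt q) < s ^ 2) (hs2 : s ^ 2 < 1)
    (η₁ η₂ ξ₁ ξ₂ : ℝ) (hη : η₁ ^ 2 + η₂ ^ 2 = 1) (hξ : ξ₁ ^ 2 + ξ₂ ^ 2 = 1)
    (heq : Real.sqrt q * (η₁ * ξ₂ - s ^ 2 * η₂ * ξ₁) + (1 - s ^ 2) * ξ₁ * ξ₂ = 0)
    (hne : η₁ * η₂ ≠ 0) :
    ξ₁ * ξ₂ ≠ 0 ∧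
    (|η₁| / |ξ₁| - s ^ 2 * |η₂| / |ξ₂| = (1 - s ^ 2) / Real.sqrt q ∨
     |η₁| / |ξ₁| - s ^ 2 * |η₂| / |ξ₂| = -((1 - s ^ 2) / Real.sqrt q)) :=
  stmt_17_general q s hq hs1 hs2 η₁ η₂ ξ₁ ξ₂ hη hξ heq hne
end

section
/- Let q > 1 and suppose ρ is a C² positive 2π-periodic admissible radius function with (ln ρ)'' < √q/(1+√q) everywhere. Fix η ∈ 𝕊¹ with angle θ_η, and let θ₁ be the solution of (ln ρ)'(θ) = h(θ − θ_η) with θ₁ − θ_η ∈ (θ_q − π, π − θ_q), and θ₂ be the solution of (ln ρ)'(θ) = h_π(θ − θ_η) with θ₂ − θ_η ∈ (−θ_q, θ_q), where h(s) = √q sin s/(√q cos s + 1), h_π(s) = h(s − π), θ_q = arccos(1/√q). If (ln ρ)'(θ₂) > 0, then 0 < θ₂ − θ_η < θ₁ − θ_η < π − θ_q, (ln ρ)'(θ₁) > 0, 0 < sin(θ₂ − θ_η) < sin(θ₁ − θ_η), and ρ(θ₂) < ρ(θ₁). -/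
/-! With `g = (ln ρ)'`, the admissibility bound `g' < √q / (1 + √q) ≤ h'` makes
`θ ↦ g θ - h (θ - θη)` strictly decreasing wherever `h` is defined. It vanishes at `θ₁`, while at
`θ₂` it equals `h_π s₂ - h s₂ > 0` (with `s₂ = θ₂ - θη`; `sin s₂ > 0` because `g θ₂ > 0`).
Hence `θ₂ < θ₁`, and on `[θ₂, θ₁]` we get `g ≥ h (· - θη) > 0`, so `ln ρ` increases from `θ₂`
to `θ₁`. -/

open Real Set

-- The paper's `h`, with `r` standing for `√q`; its `h_π s` is `hFun r (s - π)`.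
noncomputable def hFun (r s : ℝ) : ℝ := r * sin s / (r * cos s + 1)

lemma hFun_sub_pi (r s : ℝ) : hFun r (s - π) = r * sin s / (r * cos s - 1) := by
  rw [hFun, sin_sub_pi, cos_sub_pi, ← neg_div_neg_eq]
  ring_nf

lemma hasDerivAt_hFun {r s : ℝ} (hs : r * cos s + 1 ≠ 0) :
    HasDerivAt (hFun r) ((r ^ 2 + r * cos s) / (r * cos s + 1) ^ 2) s := by
  refine (((hasDerivAt_sin s).const_mul r).div
    (((hasDerivAt_cos s).const_mul r).add_const 1) hs).congr_deriv ?_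
  congr 1
  linear_combination r ^ 2 * sin_sq_add_cos_sq s

lemma div_one_add_le_deriv_hFun {r c : ℝ} (hr : 1 ≤ r) (hc : c ≤ 1) (hrc : 0 < r * c + 1) :
    r / (1 + r) ≤ (r ^ 2 + r * c) / (r * c + 1) ^ 2 := by
  rw [div_le_div_iff₀ (by linarith) (by positivity)]
  -- `(1 + r) (r + c) - (r c + 1)² = (1 - c) (r (r c + 1) + r² - 1)`
  have : 0 ≤ (1 - c) * (r * (r * c + 1) + r ^ 2 - 1) := by
    apply mul_nonneg <;> nlinarith
  nlinarith

lemma cos_arccos_inv {r : ℝ} (hr : 1 ≤ r) : cos (arccos (1 / r)) = 1 / r :=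
  cos_arccos (by linarith [show 0 < 1 / r by positivity]) (div_le_one_of_le₀ hr (by linarith))

lemma mul_cos_add_one_pos {r s : ℝ} (hr : 1 ≤ r) (hs : |s| < π - arccos (1 / r)) :
    0 < r * cos s + 1 := by
  have hcos : cos (π - arccos (1 / r)) < cos |s| :=
    cos_lt_cos_of_nonneg_of_le_pi (abs_nonneg s) (by linarith [arccos_nonneg (1 / r)]) hs
  rw [cos_pi_sub, cos_arccos_inv hr, cos_abs] at hcos
  have := mul_lt_mul_of_pos_left hcos (by linarith : 0 < r)
  rw [mul_neg, mul_one_div_cancel (by linarith)] at this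
  linarith

lemma mul_cos_sub_one_pos {r s : ℝ} (hr : 1 ≤ r) (hs : |s| < arccos (1 / r)) :
    0 < r * cos s - 1 := by
  have hcos : cos (arccos (1 / r)) < cos |s| :=
    cos_lt_cos_of_nonneg_of_le_pi (abs_nonneg s) (arccos_le_pi _) hs
  rw [cos_arccos_inv hr, cos_abs] at hcos
  have := mul_lt_mul_of_pos_left hcos (by linarith : 0 < r)
  rw [mul_one_div_cancel (by linarith)] at this
  linarith

lemma hFun_pos {r s : ℝ} (hr : 1 ≤ r) (hs₀ : 0 < s) (hs : s < π - arccos (1 / r)) :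
    0 < hFun r s :=
  div_pos (mul_pos (by linarith) (sin_pos_of_pos_of_lt_pi hs₀ (by linarith [arccos_nonneg (1 / r)])))
    (mul_cos_add_one_pos hr (abs_lt.mpr ⟨by linarith, hs⟩))

lemma hFun_lt_hFun_sub_pi {r s : ℝ} (hr : 0 < r) (hsin : 0 < sin s) (hden : 0 < r * cos s - 1) :
    hFun r s < hFun r (s - π) := by
  rw [hFun_sub_pi, hFun]
  exact div_lt_div_of_pos_left (mul_pos hr hsin) hden (by linarith)

lemma sin_pos_of_hFun_sub_pi_pos {r s : ℝ} (hr : 0 < r) (hden : 0 < r * cos s - 1)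
    (h : 0 < hFun r (s - π)) : 0 < sin s := by
  rw [hFun_sub_pi, div_pos_iff_of_pos_right hden] at h
  exact pos_of_mul_pos_right h hr.le

lemma sin_lt_sin_of_lt_of_lt_pi_sub {a b : ℝ} (ha : -(π / 2) ≤ a) (hab : a < b) (hb : a < π - b) :
    sin a < sin b := by
  rcases le_or_gt b (π / 2) with hb' | hb'
  · exact sin_lt_sin_of_lt_of_le_pi_div_two ha hb' hab
  · rw [← sin_pi_sub b]
    exact sin_lt_sin_of_lt_of_le_pi_div_two ha (by linarith) hb

lemma strictAntiOn_sub_of_hasDerivAt_lt {f k f' k' : ℝ → ℝ} {a b : ℝ}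
    (hf : ∀ x ∈ Ioo a b, HasDerivAt f (f' x) x) (hk : ∀ x ∈ Ioo a b, HasDerivAt k (k' x) x)
    (hlt : ∀ x ∈ Ioo a b, f' x < k' x) : StrictAntiOn (fun x => f x - k x) (Ioo a b) := by
  have hd : ∀ x ∈ Ioo a b, HasDerivAt (fun x => f x - k x) (f' x - k' x) x :=
    fun x hx => (hf x hx).sub (hk x hx)
  refine strictAntiOn_of_hasDerivWithinAt_neg (f' := fun x => f' x - k' x) (convex_Ioo a b)
    (fun x hx => (hd x hx).continuousAt.continuousWithinAt) ?_ ?_ <;> rw [interior_Ioo]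
  · exact fun x hx => (hd x hx).hasDerivWithinAt
  · exact fun x hx => sub_neg.mpr (hlt x hx)

lemma strictAntiOn_sub_hFun {g g' : ℝ → ℝ} {r c : ℝ} (hr : 1 ≤ r)
    (hg : ∀ t, HasDerivAt g (g' t) t) (hg' : ∀ t, g' t < r / (1 + r)) :
    StrictAntiOn (fun θ => g θ - hFun r (θ - c))
      (Ioo (c + (arccos (1 / r) - π)) (c + (π - arccos (1 / r)))) := by
  have hden : ∀ θ ∈ Ioo (c + (arccos (1 / r) - π)) (c + (π - arccos (1 / r))),
      0 < r * cos (θ - c) + 1 := fun θ ⟨h₁, h₂⟩ =>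
    mul_cos_add_one_pos hr (abs_lt.mpr ⟨by linarith, by linarith⟩)
  exact strictAntiOn_sub_of_hasDerivAt_lt (fun t _ => hg t)
    (fun θ hθ => ((hasDerivAt_hFun (hden θ hθ).ne').comp_sub_const θ c))
    (fun θ hθ => (hg' θ).trans_le (div_one_add_le_deriv_hFun hr (cos_le_one _) (hden θ hθ)))

lemma lt_of_deriv_log_pos {ρ : ℝ → ℝ} {a b : ℝ} (hρ : Continuous ρ) (hpos : ∀ t, 0 < ρ t)
    (hab : a < b) (h : ∀ t ∈ Ioo a b, 0 < deriv (fun s => log (ρ s)) t) : ρ a < ρ b := by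
  have hmono := strictMonoOn_of_deriv_pos (convex_Icc a b)
    (hρ.log fun t => (hpos t).ne').continuousOn (by rwa [interior_Icc])
  exact (log_lt_log_iff (hpos a) (hpos b)).mp
    (hmono (left_mem_Icc.2 hab.le) (right_mem_Icc.2 hab.le) hab)

theorem stmt_18_general (q : ℝ) (hq : 1 < q) (ρ : ℝ → ℝ)
    (hC2 : ContDiff ℝ 2 ρ) (hpos : ∀ t, 0 < ρ t)
    (hadm : ∀ t, deriv (deriv (fun s => Real.log (ρ s))) t < Real.sqrt q / (1 + Real.sqrt q))
    (θη θ₁ θ₂ : ℝ)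
    (hθ₁mem : θ₁ - θη ∈ Set.Ioo (Real.arccos (1 / Real.sqrt q) - π)
      (π - Real.arccos (1 / Real.sqrt q)))
    (hθ₁eq : deriv (fun s => Real.log (ρ s)) θ₁ =
      Real.sqrt q * Real.sin (θ₁ - θη) / (Real.sqrt q * Real.cos (θ₁ - θη) + 1))
    (hθ₂mem : θ₂ - θη ∈ Set.Ioo (-Real.arccos (1 / Real.sqrt q))
      (Real.arccos (1 / Real.sqrt q)))
    (hθ₂eq : deriv (fun s => Real.log (ρ s)) θ₂ =
      Real.sqrt q * Real.sin (θ₂ - θη - π) / (Real.sqrt q * Real.cos (θ₂ - θη - π) + 1))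
    (hpos2 : 0 < deriv (fun s => Real.log (ρ s)) θ₂) :
    0 < θ₂ - θη ∧ θ₂ - θη < θ₁ - θη ∧ θ₁ - θη < π - Real.arccos (1 / Real.sqrt q) ∧
    0 < deriv (fun s => Real.log (ρ s)) θ₁ ∧
    0 < Real.sin (θ₂ - θη) ∧ Real.sin (θ₂ - θη) < Real.sin (θ₁ - θη) ∧
    ρ θ₂ < ρ θ₁ := by
  set r := √q
  have hr : 1 < r := by rw [← sqrt_one]; exact sqrt_lt_sqrt zero_le_one hq
  have hθq : arccos (1 / r) < π / 2 := arccos_lt_pi_div_two.mpr (by positivity)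
  set g := deriv fun s => log (ρ s)
  have hg : ∀ t, HasDerivAt g (deriv g t) t := fun t =>
    (((hC2.log fun t => (hpos t).ne').deriv' (n := 1)).differentiable one_ne_zero t).hasDerivAt
  change g θ₁ = hFun r (θ₁ - θη) at hθ₁eq
  change g θ₂ = hFun r (θ₂ - θη - π) at hθ₂eq
  obtain ⟨hs₁l, hs₁r⟩ := hθ₁mem
  obtain ⟨hs₂l, hs₂r⟩ := hθ₂mem
  have hden₂ : 0 < r * cos (θ₂ - θη) - 1 := mul_cos_sub_one_pos hr.le (abs_lt.mpr ⟨hs₂l, hs₂r⟩)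
  have hsin₂ : 0 < sin (θ₂ - θη) :=
    sin_pos_of_hFun_sub_pi_pos (by positivity) hden₂ (hθ₂eq ▸ hpos2)
  have hs₂ : 0 < θ₂ - θη := by
    by_contra! h
    exact (sin_nonpos_of_nonpos_of_neg_pi_le h (by linarith)).not_gt hsin₂
  set S := Ioo (θη + (arccos (1 / r) - π)) (θη + (π - arccos (1 / r)))
  have hanti : StrictAntiOn (fun θ => g θ - hFun r (θ - θη)) S :=
    strictAntiOn_sub_hFun hr.le hg hadm
  have hθ₁S : θ₁ ∈ S := ⟨by linarith, by linarith⟩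
  have hθ₂S : θ₂ ∈ S := ⟨by linarith, by linarith⟩
  have hθ₂₁ : θ₂ < θ₁ := by
    refine (hanti.lt_iff_gt hθ₁S hθ₂S).mp ?_
    linarith [hFun_lt_hFun_sub_pi (by positivity) hsin₂ hden₂]
  have hg_pos : ∀ θ ∈ Icc θ₂ θ₁, 0 < g θ := by
    intro θ hθ
    have hθS : θ ∈ S := ordConnected_Ioo.out hθ₂S hθ₁S hθ
    have hF : g θ₁ - hFun r (θ₁ - θη) ≤ g θ - hFun r (θ - θη) :=
      hanti.antitoneOn hθS hθ₁S hθ.2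
    have hh : 0 < hFun r (θ - θη) := hFun_pos hr.le (by linarith [hθ.1]) (by linarith [hθS.2])
    linarith
  refine ⟨hs₂, by linarith, hs₁r, hg_pos θ₁ ⟨hθ₂₁.le, le_rfl⟩, hsin₂,
    sin_lt_sin_of_lt_of_lt_pi_sub (by linarith) (by linarith) (by linarith),
    lt_of_deriv_log_pos hC2.continuous hpos hθ₂₁ fun θ hθ => hg_pos θ (Ioo_subset_Icc_self hθ)⟩

theorem stmt_18 (q : ℝ) (hq : 1 < q) (ρ : ℝ → ℝ)
    (hC2 : ContDiff ℝ 2 ρ) (hpos : ∀ t, 0 < ρ t)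
    (hper : ∀ t, ρ (t + 2 * π) = ρ t)
    (hadm : ∀ t, deriv (deriv (fun s => Real.log (ρ s))) t < Real.sqrt q / (1 + Real.sqrt q))
    (θη θ₁ θ₂ : ℝ)
    (hθ₁mem : θ₁ - θη ∈ Set.Ioo (Real.arccos (1 / Real.sqrt q) - π)
      (π - Real.arccos (1 / Real.sqrt q)))
    (hθ₁eq : deriv (fun s => Real.log (ρ s)) θ₁ =
      Real.sqrt q * Real.sin (θ₁ - θη) / (Real.sqrt q * Real.cos (θ₁ - θη) + 1))
    (hθ₂mem : θ₂ - θη ∈ Set.Ioo (-Real.arccos (1 / Real.sqrt q))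
      (Real.arccos (1 / Real.sqrt q)))
    (hθ₂eq : deriv (fun s => Real.log (ρ s)) θ₂ =
      Real.sqrt q * Real.sin (θ₂ - θη - π) / (Real.sqrt q * Real.cos (θ₂ - θη - π) + 1))
    (hpos2 : 0 < deriv (fun s => Real.log (ρ s)) θ₂) :
    0 < θ₂ - θη ∧ θ₂ - θη < θ₁ - θη ∧ θ₁ - θη < π - Real.arccos (1 / Real.sqrt q) ∧
    0 < deriv (fun s => Real.log (ρ s)) θ₁ ∧
    0 < Real.sin (θ₂ - θη) ∧ Real.sin (θ₂ - θη) < Real.sin (θ₁ - θη) ∧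
    ρ θ₂ < ρ θ₁ :=
  stmt_18_general q hq ρ hC2 hpos hadm θη θ₁ θ₂ hθ₁mem hθ₁eq hθ₂mem hθ₂eq hpos2
end

section
/- Let q > 1 and let ρ be C², positive, 2π-periodic with (ln ρ)''(t) < √q/(1+√q) for all t. For fixed j ∈ {1,2}, let θ(θ_η) denote the solution branch of (ln ρ)'(θ) = √q sin(θ−θ_η)/(√q cos(θ−θ_η)+1) with (−1)^{j−1}(√q·cos(θ−θ_η)+1) > 0. Then θ is a C¹ function of θ_η with dθ/dθ_η = √(q + (q−1)·(ln ρ)'(θ)²) / (√(q + (q−1)·(ln ρ)'(θ)²) + (−1)^{j}·(√q·cos(θ−θ_η)+1)·(ln ρ)''(θ)) > 0. -/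
/-!
Write `φ = θ - θ_η` and `g = (ln ρ)'`. On the branch of sign `σ = (-1)^(j-1)`, squaring the
equation `g(θ) (√q cos φ + 1) = √q sin φ` gives a quadratic for `√q cos φ + 1` whose admissible root
is `(1 + σ √(q + (q-1) g²)) / (1 + g²)`; hence `(cos φ, sin φ)` is an explicit `C¹` function of `θ`.
Locally `θ_η = θ - φ`, where `φ` is recovered from `(cos φ, sin φ)` by an `arcsin`, so `θ ↦ θ_η`
is a differentiable left inverse of the continuous map `θ_η ↦ θ`. Its derivative `1 - φ'(θ)` equals
`(√(q + (q-1) g²) - σ (√q cos φ + 1) (ln ρ)''(θ)) / √(q + (q-1) g²)`, which is positive because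
`|√q cos φ + 1| ≤ 1 + √q`, `(ln ρ)'' < √q / (1 + √q)` and `√(q + (q-1) g²) ≥ √q`.
-/

open Real Filter Topology Set

theorem hasDerivAt_of_cos_sin_sub_eq {Θ C S : ℝ → ℝ} {α₀ C' S' : ℝ}
    (hΘ : ContinuousAt Θ α₀) (hC : HasDerivAt C C' (Θ α₀)) (hS : HasDerivAt S S' (Θ α₀))
    (hCS : ∀ᶠ α in 𝓝 α₀, cos (Θ α - α) = C (Θ α) ∧ sin (Θ α - α) = S (Θ α))
    (hne : 1 - (S' * C (Θ α₀) - C' * S (Θ α₀)) ≠ 0) :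
    HasDerivAt Θ (1 - (S' * C (Θ α₀) - C' * S (Θ α₀)))⁻¹ α₀ := by
  set φ₀ := Θ α₀ - α₀
  obtain ⟨hc₀, hs₀⟩ := hCS.self_of_nhds
  have hnear : ∀ᶠ α in 𝓝 α₀, Θ α - α - φ₀ ∈ Icc (-(π / 2)) (π / 2) := by
    have : Tendsto (fun α => Θ α - α - φ₀) (𝓝 α₀) (𝓝 (Θ α₀ - α₀ - φ₀)) :=
      ((hΘ.sub continuousAt_id).sub continuousAt_const).tendsto
    rw [sub_self] at this
    exact this (Icc_mem_nhds (by linarith [pi_pos]) (by linarith [pi_pos]))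
  -- near `α₀`, `Θ α - α` is recovered from the point `(C, S)` as `φ₀ + arcsin (sin (· - φ₀))`
  refine HasDerivAt.of_local_left_inverse
    (f := fun t => t - φ₀ - arcsin (S t * cos φ₀ - C t * sin φ₀)) hΘ ?_ hne ?_
  · have harcsin : HasDerivAt arcsin 1 (S (Θ α₀) * cos φ₀ - C (Θ α₀) * sin φ₀) := by
      rw [← hc₀, ← hs₀, mul_comm, sub_self]
      simpa using hasDerivAt_arcsin (x := 0) (by norm_num) (by norm_num)
    refine (((hasDerivAt_id _).sub_const φ₀).sub (harcsin.comp
      (h := fun t => S t * cos φ₀ - C t * sin φ₀) _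
      ((hS.mul_const _).sub (hC.mul_const _)))).congr_deriv ?_
    rw [← hc₀, ← hs₀]
    ring
  · filter_upwards [hCS, hnear] with α ⟨hc, hs⟩ hα
    rw [← hc, ← hs, ← sin_sub, arcsin_sin' hα]
    ring

/-- The value of `√q * cos (θ - θ_η) + 1` on the branch of sign `σ`, as a function of
`G = (ln ρ)' θ`. -/
noncomputable def branchDenom (q σ G : ℝ) : ℝ :=
  (1 + σ * √(q + (q - 1) * G ^ 2)) / (1 + G ^ 2)

theorem sqrt_mul_cos_add_one_eq_branchDenom {q σ G φ : ℝ} (hq : 1 < q) (hσ : σ ^ 2 = 1)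
    (hbranch : G * (√q * cos φ + 1) = √q * sin φ) (hsign : 0 < σ * (√q * cos φ + 1)) :
    √q * cos φ + 1 = branchDenom q σ G := by
  set D := √q * cos φ + 1
  set S := √(q + (q - 1) * G ^ 2)
  have hS2 : S ^ 2 = q + (q - 1) * G ^ 2 := sq_sqrt (by nlinarith [sq_nonneg G])
  have hS1 : 1 < S := by
    rw [show (1 : ℝ) = √1 by simp]
    exact sqrt_lt_sqrt zero_le_one (by nlinarith [sq_nonneg G])
  -- squaring the branch equation and using `sin² + cos² = 1` gives `((1 + G²) D - 1)² = S²`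
  have hsq : ((1 + G ^ 2) * D - 1 - σ * S) * ((1 + G ^ 2) * D - 1 + σ * S) = 0 := by
    linear_combination (1 + G ^ 2) * (G * D + √q * sin φ) * hbranch
      + (1 + G ^ 2) * √q ^ 2 * sin_sq_add_cos_sq φ - S ^ 2 * hσ - hS2
      + (1 + G ^ 2) * sq_sqrt (by linarith : (0 : ℝ) ≤ q)
  rw [branchDenom, eq_div_iff (by positivity)]
  rcases mul_eq_zero.mp hsq with h | h
  · linarith
  · have : σ * D * (1 + G ^ 2) = σ - S := by linear_combination σ * h - S * hσ
    nlinarith [mul_pos hsign (by positivity : (0 : ℝ) < 1 + G ^ 2)]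

theorem hasDerivAt_branchDenom {q : ℝ} (σ : ℝ) (hq : 1 < q) (G : ℝ) :
    HasDerivAt (branchDenom q σ)
      ((σ * (q - 1) * G / √(q + (q - 1) * G ^ 2) - 2 * G * branchDenom q σ G) / (1 + G ^ 2)) G := by
  have hrad : 0 < q + (q - 1) * G ^ 2 := by nlinarith [sq_nonneg G]
  have hS0 : √(q + (q - 1) * G ^ 2) ≠ 0 := (sqrt_pos.mpr hrad).ne'
  have hS : HasDerivAt (fun G => √(q + (q - 1) * G ^ 2))
      ((q - 1) * G / √(q + (q - 1) * G ^ 2)) G := by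
    refine ((((hasDerivAt_id G).fun_pow 2).const_mul (q - 1)).const_add q).sqrt hrad.ne'
      |>.congr_deriv ?_
    simp only [id]
    field_simp
    ring
  refine ((hS.const_mul σ).const_add 1).div (((hasDerivAt_id G).fun_pow 2).const_add 1)
    (by positivity) |>.congr_deriv ?_
  simp only [branchDenom, id]
  field_simp
  ring

/-- With `(C, S) = ((D - 1) / r, G D / r)` the unit vector `(cos φ, sin φ)`, the bracket on the left
is its rotation rate `φ'`. -/
theorem one_sub_rotation_rate_eq {q r σ S G H D D' : ℝ} (hr : r ^ 2 = q) (hr0 : r ≠ 0)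
    (hσ : σ ^ 2 = 1) (hS : S ^ 2 = q + (q - 1) * G ^ 2) (hS0 : S ≠ 0)
    (hD : (1 + G ^ 2) * D = 1 + σ * S)
    (hD' : (1 + G ^ 2) * D' = (σ * (q - 1) * G / S - 2 * G * D) * H) :
    1 - ((H * D + G * D') / r * ((D - 1) / r) - D' / r * (G * D / r)) = (S - σ * D * H) / S := by
  have hG : 1 + G ^ 2 ≠ 0 := by positivity
  set T := σ * S
  set T' := σ * (q - 1) * G * H / S
  have hT : T ^ 2 = q + (q - 1) * G ^ 2 := by rw [mul_pow, hσ, one_mul, hS]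
  have hT' : T * T' = (q - 1) * G * H := by
    simp only [T, T']
    field_simp
    linear_combination (q - 1) * G * H * hσ
  have hD'' : (1 + G ^ 2) * D' = T' - 2 * G * H * D := by
    rw [hD']
    ring
  have key : (H * D * (D - 1) - G * D') * T = q * D * H := by
    apply mul_left_cancel₀ (pow_ne_zero 3 hG)
    linear_combination (1 + G ^ 2) * ((-G * T * (1 + G ^ 2)) * hD'' + (-G * (1 + G ^ 2)) * hT'
      + H * (G ^ 2 + (1 + G ^ 2) * D) * hT + H * (G ^ 2 * (T - 1) + (1 + G ^ 2) * D * T) * hD)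
  field_simp
  linear_combination -σ * key + (σ * D * H) * hr - (H * D * S - H * D ^ 2 * S + G * D' * S) * hσ

theorem hasDerivAt_of_branch {q σ H α₀ : ℝ} {g Θ : ℝ → ℝ} (hq : 1 < q) (hσ : σ ^ 2 = 1)
    (hΘ : ContinuousAt Θ α₀) (hg : HasDerivAt g H (Θ α₀))
    (hbranch : ∀ᶠ α in 𝓝 α₀, g (Θ α) * (√q * cos (Θ α - α) + 1) = √q * sin (Θ α - α) ∧
      0 < σ * (√q * cos (Θ α - α) + 1))
    (hne : √(q + (q - 1) * g (Θ α₀) ^ 2) - σ * (√q * cos (Θ α₀ - α₀) + 1) * H ≠ 0) :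
    HasDerivAt Θ (√(q + (q - 1) * g (Θ α₀) ^ 2) /
      (√(q + (q - 1) * g (Θ α₀) ^ 2) - σ * (√q * cos (Θ α₀ - α₀) + 1) * H)) α₀ := by
  have hq0 : 0 < q := by linarith
  have hr0 : √q ≠ 0 := (sqrt_pos.mpr hq0).ne'
  have hrad : 0 < q + (q - 1) * g (Θ α₀) ^ 2 := by nlinarith [sq_nonneg (g (Θ α₀))]
  have hcossin : ∀ᶠ α in 𝓝 α₀, cos (Θ α - α) = (branchDenom q σ (g (Θ α)) - 1) / √q ∧
      sin (Θ α - α) = g (Θ α) * branchDenom q σ (g (Θ α)) / √q := by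
    filter_upwards [hbranch] with α ⟨heq, hsign⟩
    rw [← sqrt_mul_cos_add_one_eq_branchDenom hq hσ heq hsign, heq]
    constructor
    · field_simp
      ring
    · field_simp
  have hD₀ : √q * cos (Θ α₀ - α₀) + 1 = branchDenom q σ (g (Θ α₀)) := by
    rw [hcossin.self_of_nhds.1]
    field_simp
    ring
  set D' := (σ * (q - 1) * g (Θ α₀) / √(q + (q - 1) * g (Θ α₀) ^ 2)
    - 2 * g (Θ α₀) * branchDenom q σ (g (Θ α₀))) / (1 + g (Θ α₀) ^ 2) * H
  have hD : HasDerivAt (fun t => branchDenom q σ (g t)) D' (Θ α₀) :=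
    (hasDerivAt_branchDenom σ hq (g (Θ α₀))).comp (Θ α₀) hg
  have hrate := one_sub_rotation_rate_eq (D := branchDenom q σ (g (Θ α₀))) (D' := D')
    (sq_sqrt hq0.le) hr0 hσ (sq_sqrt hrad.le) (sqrt_pos.mpr hrad).ne'
    (mul_div_cancel₀ _ (by positivity)) (by rw [← mul_assoc, mul_div_cancel₀ _ (by positivity)])
  rw [hD₀] at hne ⊢
  have hΘ' := hasDerivAt_of_cos_sin_sub_eq hΘ ((hD.sub_const 1).div_const (√q))
    ((hg.fun_mul hD).div_const (√q)) hcossin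
    (by rw [hrate]; exact div_ne_zero hne (sqrt_pos.mpr hrad).ne')
  rwa [hrate, inv_div] at hΘ'

theorem neg_one_pow_mul_sqrt_mul_cos_add_one_le (n : ℕ) {q : ℝ} (φ : ℝ) :
    (-1 : ℝ) ^ n * (√q * cos φ + 1) ≤ 1 + √q :=
  calc (-1 : ℝ) ^ n * (√q * cos φ + 1) ≤ |(-1 : ℝ) ^ n * (√q * cos φ + 1)| := le_abs_self _
    _ = |√q * cos φ + 1| := by rw [abs_mul, abs_neg_one_pow, one_mul]
    _ ≤ |√q * cos φ| + |1| := abs_add_le _ _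
    _ ≤ 1 + √q := by
        rw [abs_mul, abs_of_nonneg (sqrt_nonneg q), abs_one]
        nlinarith [abs_cos_le_one φ, sqrt_nonneg q]

theorem sub_mul_pos_of_lt_div {r S x h : ℝ} (hr : 0 < r) (hS : r ≤ S) (hx₀ : 0 < x)
    (hx : x ≤ 1 + r) (hh : h < r / (1 + r)) : 0 < S - x * h := by
  rcases le_or_gt h 0 with h0 | h0
  · nlinarith
  · have : (1 + r) * h < r := by rwa [lt_div_iff₀ (by linarith), mul_comm] at hh
    nlinarith

theorem stmt_19_general (q : ℝ) (hq : 1 < q) (ρ : ℝ → ℝ)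
    (hC2 : ContDiff ℝ 2 ρ) (hpos : ∀ t, 0 < ρ t)
    (hadm : ∀ t, deriv (deriv (fun s => Real.log (ρ s))) t < Real.sqrt q / (1 + Real.sqrt q))
    (j : ℕ) (hj : j = 1 ∨ j = 2)
    (Θ : ℝ → ℝ) (hΘcont : Continuous Θ)
    (hbranch : ∀ α : ℝ,
      deriv (fun s => Real.log (ρ s)) (Θ α) =
        Real.sqrt q * Real.sin (Θ α - α) / (Real.sqrt q * Real.cos (Θ α - α) + 1) ∧
      0 < (-1 : ℝ) ^ (j - 1) * (Real.sqrt q * Real.cos (Θ α - α) + 1)) :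
    ∀ α : ℝ,
      HasDerivAt Θ
        (Real.sqrt (q + (q - 1) * (deriv (fun s => Real.log (ρ s)) (Θ α)) ^ 2) /
          (Real.sqrt (q + (q - 1) * (deriv (fun s => Real.log (ρ s)) (Θ α)) ^ 2) +
            (-1 : ℝ) ^ j * (Real.sqrt q * Real.cos (Θ α - α) + 1) *
              deriv (deriv (fun s => Real.log (ρ s))) (Θ α))) α ∧
      0 < Real.sqrt (q + (q - 1) * (deriv (fun s => Real.log (ρ s)) (Θ α)) ^ 2) /
          (Real.sqrt (q + (q - 1) * (deriv (fun s => Real.log (ρ s)) (Θ α)) ^ 2) +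
            (-1 : ℝ) ^ j * (Real.sqrt q * Real.cos (Θ α - α) + 1) *
              deriv (deriv (fun s => Real.log (ρ s))) (Θ α)) := by
  intro α
  set g := deriv (fun s => log (ρ s))
  have hg : Differentiable ℝ g := (hC2.log fun t => (hpos t).ne').differentiable_deriv_two
  set σ : ℝ := (-1) ^ (j - 1)
  have hσ : σ ^ 2 = 1 := by rw [← pow_mul, mul_comm, pow_mul]; norm_num
  have hσj : (-1 : ℝ) ^ j = -σ := by rcases hj with rfl | rfl <;> norm_num [σ]
  have hprod : ∀ α, g (Θ α) * (√q * cos (Θ α - α) + 1) = √q * sin (Θ α - α) ∧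
      0 < σ * (√q * cos (Θ α - α) + 1) := fun α => by
    obtain ⟨heq, hsign⟩ := hbranch α
    exact ⟨by rw [heq, div_mul_cancel₀ _ (by rintro h; simp [h] at hsign)], hsign⟩
  have hsqrt_le : √q ≤ √(q + (q - 1) * g (Θ α) ^ 2) :=
    sqrt_le_sqrt (by nlinarith [sq_nonneg (g (Θ α))])
  have hden : 0 < √(q + (q - 1) * g (Θ α) ^ 2) - σ * (√q * cos (Θ α - α) + 1) * deriv g (Θ α) :=
    sub_mul_pos_of_lt_div (sqrt_pos.mpr (by linarith)) hsqrt_le (hprod α).2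
      (neg_one_pow_mul_sqrt_mul_cos_add_one_le _ _) (hadm _)
  rw [hσj, neg_mul, neg_mul, ← sub_eq_add_neg]
  refine ⟨hasDerivAt_of_branch hq hσ hΘcont.continuousAt (hg _).hasDerivAt
    (Eventually.of_forall hprod) hden.ne', div_pos ?_ hden⟩
  exact (sqrt_pos.mpr (by linarith)).trans_le hsqrt_le

theorem stmt_19 (q : ℝ) (hq : 1 < q) (ρ : ℝ → ℝ)
    (hC2 : ContDiff ℝ 2 ρ) (hpos : ∀ t, 0 < ρ t)
    (hper : ∀ t, ρ (t + 2 * π) = ρ t)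
    (hadm : ∀ t, deriv (deriv (fun s => Real.log (ρ s))) t < Real.sqrt q / (1 + Real.sqrt q))
    (j : ℕ) (hj : j = 1 ∨ j = 2)
    (Θ : ℝ → ℝ) (hΘcont : Continuous Θ)
    (hbranch : ∀ α : ℝ,
      deriv (fun s => Real.log (ρ s)) (Θ α) =
        Real.sqrt q * Real.sin (Θ α - α) / (Real.sqrt q * Real.cos (Θ α - α) + 1) ∧
      0 < (-1 : ℝ) ^ (j - 1) * (Real.sqrt q * Real.cos (Θ α - α) + 1)) :
    ∀ α : ℝ,
      HasDerivAt Θ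
        (Real.sqrt (q + (q - 1) * (deriv (fun s => Real.log (ρ s)) (Θ α)) ^ 2) /
          (Real.sqrt (q + (q - 1) * (deriv (fun s => Real.log (ρ s)) (Θ α)) ^ 2) +
            (-1 : ℝ) ^ j * (Real.sqrt q * Real.cos (Θ α - α) + 1) *
              deriv (deriv (fun s => Real.log (ρ s))) (Θ α))) α ∧
      0 < Real.sqrt (q + (q - 1) * (deriv (fun s => Real.log (ρ s)) (Θ α)) ^ 2) /
          (Real.sqrt (q + (q - 1) * (deriv (fun s => Real.log (ρ s)) (Θ α)) ^ 2) +
            (-1 : ℝ) ^ j * (Real.sqrt q * Real.cos (Θ α - α) + 1) *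
              deriv (deriv (fun s => Real.log (ρ s))) (Θ α)) :=
  stmt_19_general q hq ρ hC2 hpos hadm j hj Θ hΘcont hbranch
end
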